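/- Any measure M on objects (ρ,H) that is monotone under correlated-catalytic free transitions satisfies M(ρ₁₂, H₁+H₂) ≥ M(ρ₁⊗ρ₂, H₁+H₂) for every bipartite state ρ₁₂ with marginals ρ₁, ρ₂: taking the catalyst to be (ρ₂, H₂) and applying the swap between the second subsystem and the catalyst yields a correlated-catalytic transition (ρ₁₂, H₁+H₂) → (ρ₁⊗ρ₂, H₁+H₂) whose final catalyst marginal is ρ₂. -/

import Mathlib

open Matrix
open scoped Kronecker ComplexOrder

noncomputable section

/-- Matrix logarithm via spectral decomposition (0 for non-Hermitian input). -/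
def mlog {d : Type*} [Fintype d] [DecidableEq d] (A : Matrix d d ℂ) : Matrix d d ℂ :=
  if h : A.IsHermitian then
    (h.eigenvectorUnitary : Matrix d d ℂ) *
      Matrix.diagonal (fun i => (Real.log (h.eigenvalues i) : ℂ)) *
      (star (h.eigenvectorUnitary : Matrix d d ℂ))
  else 0

/-- Quantum relative entropy S(ρ‖σ) = Tr(ρ log ρ − ρ log σ). -/
def relEnt {d : Type*} [Fintype d] [DecidableEq d] (ρ σ : Matrix d d ℂ) : ℝ :=
  (Matrix.trace (ρ * mlog ρ - ρ * mlog σ)).re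

/-- Von Neumann entropy S(ρ) = −Tr(ρ log ρ). -/
def vnEnt {d : Type*} [Fintype d] [DecidableEq d] (ρ : Matrix d d ℂ) : ℝ :=
  -(Matrix.trace (ρ * mlog ρ)).re

/-- ρ is a density operator. -/
def IsDensity {d : Type*} [Fintype d] (ρ : Matrix d d ℂ) : Prop :=
  ρ.PosSemidef ∧ ρ.trace = 1

/-- Full-rank density operator. -/
def IsFaithfulState {d : Type*} [Fintype d] (σ : Matrix d d ℂ) : Prop :=
  σ.PosDef ∧ σ.trace = 1

/-- Apply a linear map blockwise (i.e. (id_k ⊗ T)). -/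
def blockApply {d e : Type*} [Fintype d] [DecidableEq d] [Fintype e] [DecidableEq e]
    (T : Matrix d d ℂ →ₗ[ℂ] Matrix e e ℂ) {k : Type*}
    (M : Matrix (k × d) (k × d) ℂ) : Matrix (k × e) (k × e) ℂ :=
  Matrix.of fun p q => T (Matrix.of fun i j => M (p.1, i) (q.1, j)) p.2 q.2

/-- Quantum channel: trace preserving and completely positive. -/
def IsQChannel {d e : Type*} [Fintype d] [DecidableEq d] [Fintype e] [DecidableEq e]
    (T : Matrix d d ℂ →ₗ[ℂ] Matrix e e ℂ) : Prop :=
  (∀ M : Matrix d d ℂ, (T M).trace = M.trace) ∧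
  (∀ (k : Type) [Fintype k] [DecidableEq k] (M : Matrix (k × d) (k × d) ℂ),
      M.PosSemidef → (blockApply T M).PosSemidef)

/-- Gibbs state ω_{β,H} = e^{−βH}/Tr e^{−βH}. -/
def gibbs {d : Type*} [Fintype d] [DecidableEq d] (β : ℝ) (H : Matrix d d ℂ) :
    Matrix d d ℂ :=
  (Matrix.trace (NormedSpace.exp ((-β : ℂ) • H)))⁻¹ • NormedSpace.exp ((-β : ℂ) • H)

/-- Non-equilibrium free energy difference ΔF_β(ρ,H) = (1/β) S(ρ‖ω_{β,H}). -/
def dF {d : Type*} [Fintype d] [DecidableEq d] (β : ℝ) (ρ H : Matrix d d ℂ) : ℝ :=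
  (1 / β) * relEnt ρ (gibbs β H)

/-- Partial trace over the second factor. -/
def ptraceRight {d₁ d₂ : Type*} [Fintype d₂]
    (M : Matrix (d₁ × d₂) (d₁ × d₂) ℂ) : Matrix d₁ d₁ ℂ :=
  Matrix.of fun i j => ∑ k, M (i, k) (j, k)

/-- Partial trace over the first factor. -/
def ptraceLeft {d₁ d₂ : Type*} [Fintype d₁]
    (M : Matrix (d₁ × d₂) (d₁ × d₂) ℂ) : Matrix d₂ d₂ ℂ :=
  Matrix.of fun i j => ∑ k, M (k, i) (k, j)

/-- n-fold tensor power of a matrix. -/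
def tpow {d : Type*} [Fintype d] (ρ : Matrix d d ℂ) (n : ℕ) :
    Matrix (Fin n → d) (Fin n → d) ℂ :=
  Matrix.of fun a b => ∏ i, ρ (a i) (b i)

/-- Tensor product of a finite family of matrices. -/
def tprodFam {k : ℕ} {c : Type*} [Fintype c] (γ : Fin k → Matrix c c ℂ) :
    Matrix (Fin k → c) (Fin k → c) ℂ :=
  Matrix.of fun a b => ∏ i, γ i (a i) (b i)

/-- Single-site marginal at site i of a state on an n-fold tensor product. -/
def marginal {d : Type*} [Fintype d] [DecidableEq d] {n : ℕ}
    (M : Matrix (Fin n → d) (Fin n → d) ℂ) (i : Fin n) : Matrix d d ℂ :=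
  Matrix.of fun a b => ∑ g : {j : Fin n // j ≠ i} → d,
    M (fun j => if h : j = i then a else g ⟨j, h⟩)
      (fun j => if h : j = i then b else g ⟨j, h⟩)

/-- Trace norm of a matrix: sum of singular values. -/
def traceNorm {d : Type*} [Fintype d] [DecidableEq d] (A : Matrix d d ℂ) : ℝ :=
  ∑ i, Real.sqrt ((Matrix.posSemidef_conjTranspose_mul_self A).1.eigenvalues i)


/-! The swap of the second subsystem with the catalyst (ρ₂, H₂) qualifies because the Gibbs state
of a non-interacting Hamiltonian factorizes, ω(H₁ ⊗ 1 + 1 ⊗ H₂) = ω(H₁) ⊗ ω(H₂), so the swap fixes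
ω(H₁) ⊗ ω(H₂) ⊗ ω(H₂). The swapped state has system marginal ρ₁ ⊗ ρ₂ and catalyst marginal
(Tr ρ₂) ρ₂ = ρ₂. -/

theorem Matrix.IsHermitian.kronecker {m n R : Type*} [CommMagma R] [StarMul R]
    {A : Matrix m m R} {B : Matrix n n R} (hA : A.IsHermitian) (hB : B.IsHermitian) :
    (A ⊗ₖ B).IsHermitian := by
  rw [IsHermitian, conjTranspose_kronecker, hA, hB]

section Kronecker

variable {m n : Type*} [Fintype m] [DecidableEq m] [Fintype n] [DecidableEq n]

variable (n) in
def kroneckerOneRingHom : Matrix m m ℂ →+* Matrix (m × n) (m × n) ℂ where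
  toFun A := A ⊗ₖ (1 : Matrix n n ℂ)
  map_one' := one_kronecker_one
  map_mul' A B := by rw [← mul_kronecker_mul, one_mul]
  map_zero' := zero_kronecker _
  map_add' A B := add_kronecker _ _ _

variable (m) in
def oneKroneckerRingHom : Matrix n n ℂ →+* Matrix (m × n) (m × n) ℂ where
  toFun B := (1 : Matrix m m ℂ) ⊗ₖ B
  map_one' := one_kronecker_one
  map_mul' A B := by rw [← mul_kronecker_mul, one_mul]
  map_zero' := kronecker_zero _
  map_add' A B := kronecker_add _ _ _

open scoped Matrix.Norms.Operator in
theorem exp_kronecker_one (A : Matrix m m ℂ) :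
    NormedSpace.exp (A ⊗ₖ (1 : Matrix n n ℂ)) = NormedSpace.exp A ⊗ₖ (1 : Matrix n n ℂ) :=
  (NormedSpace.map_exp (kroneckerOneRingHom n)
    (continuous_pi fun _ => continuous_pi fun _ =>
      (continuous_apply_apply _ _).mul continuous_const) A).symm

open scoped Matrix.Norms.Operator in
theorem exp_one_kronecker (B : Matrix n n ℂ) :
    NormedSpace.exp ((1 : Matrix m m ℂ) ⊗ₖ B) = (1 : Matrix m m ℂ) ⊗ₖ NormedSpace.exp B :=
  (NormedSpace.map_exp (oneKroneckerRingHom m)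
    (continuous_pi fun _ => continuous_pi fun _ =>
      continuous_const.mul (continuous_apply_apply _ _)) B).symm

theorem exp_kronecker_one_add_one_kronecker (A : Matrix m m ℂ) (B : Matrix n n ℂ) :
    NormedSpace.exp (A ⊗ₖ (1 : Matrix n n ℂ) + (1 : Matrix m m ℂ) ⊗ₖ B)
      = NormedSpace.exp A ⊗ₖ NormedSpace.exp B := by
  have hcomm : Commute (A ⊗ₖ (1 : Matrix n n ℂ)) ((1 : Matrix m m ℂ) ⊗ₖ B) := by
    simp only [Commute, SemiconjBy, ← mul_kronecker_mul, one_mul, mul_one]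
  rw [exp_add_of_commute _ _ hcomm, exp_kronecker_one, exp_one_kronecker, ← mul_kronecker_mul,
    one_mul, mul_one]

theorem gibbs_kronecker_one_add_one_kronecker (β : ℝ) (H₁ : Matrix m m ℂ) (H₂ : Matrix n n ℂ) :
    gibbs β (H₁ ⊗ₖ (1 : Matrix n n ℂ) + (1 : Matrix m m ℂ) ⊗ₖ H₂)
      = gibbs β H₁ ⊗ₖ gibbs β H₂ := by
  rw [gibbs, gibbs, gibbs, smul_add, ← smul_kronecker, ← kronecker_smul,
    exp_kronecker_one_add_one_kronecker, trace_kronecker, smul_kronecker, kronecker_smul,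
    smul_smul, mul_inv]

end Kronecker

section PartialTrace

variable {m n : Type*} [Fintype m]

theorem ptraceLeft_eq_sum (M : Matrix (m × n) (m × n) ℂ) :
    ptraceLeft M = ∑ k, M.submatrix (Prod.mk k) (Prod.mk k) := by
  ext i j
  simp [ptraceLeft, Matrix.sum_apply]

theorem Matrix.PosSemidef.ptraceLeft [Fintype n] {M : Matrix (m × n) (m × n) ℂ}
    (hM : M.PosSemidef) : (ptraceLeft M).PosSemidef := by
  rw [ptraceLeft_eq_sum]
  exact posSemidef_sum _ fun k _ => hM.submatrix _

theorem trace_ptraceLeft [Fintype n] (M : Matrix (m × n) (m × n) ℂ) :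
    (ptraceLeft M).trace = M.trace := by
  simp only [trace, diag, ptraceLeft, of_apply, Fintype.sum_prod_type]
  exact Finset.sum_comm

theorem IsDensity.ptraceLeft [Fintype n] {ρ : Matrix (m × n) (m × n) ℂ} (hρ : IsDensity ρ) :
    IsDensity (ptraceLeft ρ) :=
  ⟨hρ.1.ptraceLeft, (trace_ptraceLeft ρ).trans hρ.2⟩

end PartialTrace

section Reindex

variable {ι κ : Type*} [Fintype ι] [Fintype κ]

theorem trace_reindex (e : ι ≃ κ) (M : Matrix ι ι ℂ) : (reindex e e M).trace = M.trace :=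
  e.symm.sum_comp fun i => M i i

theorem isQChannel_reindex [DecidableEq ι] [DecidableEq κ] (e : ι ≃ κ) :
    IsQChannel (reindexLinearEquiv ℂ ℂ e e : Matrix ι ι ℂ →ₗ[ℂ] Matrix κ κ ℂ) := by
  refine ⟨trace_reindex e, fun k _ _ M hM => ?_⟩
  have hblock : blockApply (reindexLinearEquiv ℂ ℂ e e : Matrix ι ι ℂ →ₗ[ℂ] Matrix κ κ ℂ) M
      = reindex (Equiv.prodCongr (Equiv.refl k) e) (Equiv.prodCongr (Equiv.refl k) e) M := rfl
  rw [hblock]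
  exact hM.submatrix _

end Reindex

section CatalystSwap

variable {α β γ : Type*}

def swapLastTwo (α β γ : Type*) : (α × β) × γ ≃ (α × γ) × β :=
  (Equiv.prodAssoc α β γ).trans <|
    (Equiv.prodCongr (Equiv.refl α) (Equiv.prodComm β γ)).trans (Equiv.prodAssoc α γ β).symm

theorem reindex_swapLastTwo_apply (M : Matrix ((α × β) × γ) ((α × β) × γ) ℂ)
    (a a' : α) (b b' : β) (c c' : γ) :
    reindex (swapLastTwo α β γ) (swapLastTwo α β γ) M ((a, c), b) ((a', c'), b')
      = M ((a, b), c) ((a', b'), c') :=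
  rfl

theorem reindex_swapLastTwo_kronecker (A : Matrix α α ℂ) (B : Matrix β β ℂ) (C : Matrix γ γ ℂ) :
    reindex (swapLastTwo α β γ) (swapLastTwo α β γ) (A ⊗ₖ B ⊗ₖ C) = A ⊗ₖ C ⊗ₖ B := by
  ext ⟨⟨a, c⟩, b⟩ ⟨⟨a', c'⟩, b'⟩
  simp only [reindex_swapLastTwo_apply, kronecker_apply, mul_right_comm]

theorem ptraceRight_reindex_swapLastTwo_kronecker [Fintype β]
    (ρ : Matrix (α × β) (α × β) ℂ) (C : Matrix γ γ ℂ) :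
    ptraceRight (reindex (swapLastTwo α β γ) (swapLastTwo α β γ) (ρ ⊗ₖ C))
      = ptraceRight ρ ⊗ₖ C := by
  ext ⟨a, c⟩ ⟨a', c'⟩
  simp only [ptraceRight, of_apply, reindex_swapLastTwo_apply, kronecker_apply, Finset.sum_mul]

theorem ptraceLeft_reindex_swapLastTwo_kronecker [Fintype α] [Fintype γ]
    (ρ : Matrix (α × β) (α × β) ℂ) (C : Matrix γ γ ℂ) :
    ptraceLeft (reindex (swapLastTwo α β γ) (swapLastTwo α β γ) (ρ ⊗ₖ C))
      = C.trace • ptraceLeft ρ := by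
  ext b b'
  simp only [ptraceLeft, of_apply, Fintype.sum_prod_type, reindex_swapLastTwo_apply,
    kronecker_apply, Matrix.smul_apply, trace, diag_apply, smul_eq_mul, Finset.sum_mul_sum]
  rw [Finset.sum_comm]
  exact Finset.sum_congr rfl fun _ _ => Finset.sum_congr rfl fun _ _ => mul_comm _ _

end CatalystSwap

theorem correlated_catalytic_implies_superadditive_general
    (β : ℝ)
    (M : ∀ (d : Type) [Fintype d] [DecidableEq d], Matrix d d ℂ → Matrix d d ℂ → ℝ)
    (hmono : ∀ (dS dS' dA : Type) [Fintype dS] [DecidableEq dS]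
        [Fintype dS'] [DecidableEq dS'] [Fintype dA] [DecidableEq dA]
        (G : Matrix (dS × dA) (dS × dA) ℂ →ₗ[ℂ] Matrix (dS' × dA) (dS' × dA) ℂ),
        IsQChannel G →
        ∀ (H : Matrix dS dS ℂ) (K : Matrix dS' dS' ℂ) (R : Matrix dA dA ℂ),
        H.IsHermitian → K.IsHermitian → R.IsHermitian →
        G (gibbs β H ⊗ₖ gibbs β R) = gibbs β K ⊗ₖ gibbs β R →
        ∀ (ρ : Matrix dS dS ℂ) (σ : Matrix dS' dS' ℂ) (γ : Matrix dA dA ℂ),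
        IsDensity ρ → IsDensity γ →
        ptraceRight (G (ρ ⊗ₖ γ)) = σ → ptraceLeft (G (ρ ⊗ₖ γ)) = γ →
        M dS' σ K ≤ M dS ρ H)
    (d₁ d₂ : Type) [Fintype d₁] [DecidableEq d₁] [Fintype d₂] [DecidableEq d₂]
    (ρ₁₂ : Matrix (d₁ × d₂) (d₁ × d₂) ℂ) (hρ₁₂ : IsDensity ρ₁₂)
    (H₁ : Matrix d₁ d₁ ℂ) (H₂ : Matrix d₂ d₂ ℂ)
    (hH₁ : H₁.IsHermitian) (hH₂ : H₂.IsHermitian) :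
    M (d₁ × d₂) (ptraceRight ρ₁₂ ⊗ₖ ptraceLeft ρ₁₂)
        (H₁ ⊗ₖ (1 : Matrix d₂ d₂ ℂ) + (1 : Matrix d₁ d₁ ℂ) ⊗ₖ H₂) ≤
      M (d₁ × d₂) ρ₁₂
        (H₁ ⊗ₖ (1 : Matrix d₂ d₂ ℂ) + (1 : Matrix d₁ d₁ ℂ) ⊗ₖ H₂) := by
  set H := H₁ ⊗ₖ (1 : Matrix d₂ d₂ ℂ) + (1 : Matrix d₁ d₁ ℂ) ⊗ₖ H₂
  have hH : H.IsHermitian := (hH₁.kronecker isHermitian_one).add (isHermitian_one.kronecker hH₂)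
  have hρ₂ : IsDensity (ptraceLeft ρ₁₂) := hρ₁₂.ptraceLeft
  refine hmono _ _ d₂ _ (isQChannel_reindex (swapLastTwo d₁ d₂ d₂)) H H H₂ hH hH hH₂ ?_
    ρ₁₂ _ (ptraceLeft ρ₁₂) hρ₁₂ hρ₂ (ptraceRight_reindex_swapLastTwo_kronecker _ _) ?_
  · rw [gibbs_kronecker_one_add_one_kronecker, LinearEquiv.coe_coe, coe_reindexLinearEquiv,
      reindex_swapLastTwo_kronecker]
  · rw [LinearEquiv.coe_coe, coe_reindexLinearEquiv, ptraceLeft_reindex_swapLastTwo_kronecker,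
      hρ₂.2, one_smul]

theorem correlated_catalytic_implies_superadditive
    (β : ℝ) (hβ : 0 < β)
    (M : ∀ (d : Type) [Fintype d] [DecidableEq d], Matrix d d ℂ → Matrix d d ℂ → ℝ)
    (hmono : ∀ (dS dS' dA : Type) [Fintype dS] [DecidableEq dS]
        [Fintype dS'] [DecidableEq dS'] [Fintype dA] [DecidableEq dA]
        (G : Matrix (dS × dA) (dS × dA) ℂ →ₗ[ℂ] Matrix (dS' × dA) (dS' × dA) ℂ),
        IsQChannel G →
        ∀ (H : Matrix dS dS ℂ) (K : Matrix dS' dS' ℂ) (R : Matrix dA dA ℂ),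
        H.IsHermitian → K.IsHermitian → R.IsHermitian →
        G (gibbs β H ⊗ₖ gibbs β R) = gibbs β K ⊗ₖ gibbs β R →
        ∀ (ρ : Matrix dS dS ℂ) (σ : Matrix dS' dS' ℂ) (γ : Matrix dA dA ℂ),
        IsDensity ρ → IsDensity γ →
        ptraceRight (G (ρ ⊗ₖ γ)) = σ → ptraceLeft (G (ρ ⊗ₖ γ)) = γ →
        M dS' σ K ≤ M dS ρ H)
    (d₁ d₂ : Type) [Fintype d₁] [DecidableEq d₁] [Fintype d₂] [DecidableEq d₂]
    (ρ₁₂ : Matrix (d₁ × d₂) (d₁ × d₂) ℂ) (hρ₁₂ : IsDensity ρ₁₂)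
    (H₁ : Matrix d₁ d₁ ℂ) (H₂ : Matrix d₂ d₂ ℂ)
    (hH₁ : H₁.IsHermitian) (hH₂ : H₂.IsHermitian) :
    M (d₁ × d₂) (ptraceRight ρ₁₂ ⊗ₖ ptraceLeft ρ₁₂)
        (H₁ ⊗ₖ (1 : Matrix d₂ d₂ ℂ) + (1 : Matrix d₁ d₁ ℂ) ⊗ₖ H₂) ≤
      M (d₁ × d₂) ρ₁₂
        (H₁ ⊗ₖ (1 : Matrix d₂ d₂ ℂ) + (1 : Matrix d₁ d₁ ℂ) ⊗ₖ H₂) :=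
  correlated_catalytic_implies_superadditive_general β M hmono d₁ d₂ ρ₁₂ hρ₁₂ H₁ H₂ hH₁ hH₂

end
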